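/- arXiv:1406.6812 — 3 statements merged into one kernel-verified Lean document; each statement's English description precedes it below -/
import Mathlib

section
/- Let $w_1,\dots,w_t$ be vectors in $\mathbb{R}^k$ with $\|w_\tau\| \le L$ for all $\tau$, and define $W_s = I + \sum_{\tau=1}^{s-1} w_\tau w_\tau^\top$. Then $\sum_{s=1}^t \min(1, \|w_s\|_{W_s^{-1}}^2) \le 2k \log(1 + tL^2/k)$, where $\|w\|_{M}^2 = w^\top M w$. -/
/-!
By the matrix determinant lemma, `det W_{s+1} = det W_s · (1 + ‖w_s‖²_{W_s⁻¹})`, so the sum of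
`log (1 + ‖w_s‖²_{W_s⁻¹})` telescopes to `log det W_{t+1}`, and `min 1 x ≤ 2 log (1 + x)` bounds
the potential by twice that. AM-GM on the eigenvalues gives `log det W ≤ k log (tr W / k)`, and
`tr W_{t+1} ≤ k + t L²`.
-/

open Matrix Finset

/-- `W s = I + ∑_{τ < s} w_τ w_τᵀ` (0-indexed version of `W_s = I + ∑_{τ=1}^{s-1} w_τ w_τᵀ`). -/
noncomputable def designMatrix {k : ℕ} (w : ℕ → Fin k → ℝ) (s : ℕ) :
    Matrix (Fin k) (Fin k) ℝ :=
  1 + ∑ τ ∈ Finset.range s, Matrix.vecMulVec (w τ) (w τ)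

namespace Matrix

variable {n α : Type*} [Fintype n] [DecidableEq n]

theorem det_add_vecMulVec [CommRing α] {A : Matrix n n α} (hA : IsUnit A.det) (u v : n → α) :
    (A + vecMulVec u v).det = A.det * (1 + v ⬝ᵥ A⁻¹ *ᵥ u) := by
  rw [vecMulVec_eq Unit, det_add_replicateCol_mul_replicateRow hA, det_unique (n := Unit),
    ← replicateRow_vecMul, replicateRow_mul_replicateCol, ← dotProduct_mulVec]
  rfl

theorem PosDef.log_det_le {A : Matrix n n ℝ} (hA : A.PosDef) :
    Real.log A.det ≤ Fintype.card n * Real.log (A.trace / Fintype.card n) := by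
  rcases isEmpty_or_nonempty n with _ | _
  · simp
  set μ := hA.isHermitian.eigenvalues
  have hc : (Fintype.card n : ℝ) ≠ 0 := by positivity
  have hweights : ∑ _ : n, (Fintype.card n : ℝ)⁻¹ = 1 := by
    simp [hc]
  have jensen := strictConcaveOn_log_Ioi.concaveOn.le_map_sum (t := univ)
    (fun _ _ => by positivity) hweights (fun i _ => hA.eigenvalues_pos i)
  simp only [smul_eq_mul, ← mul_sum] at jensen
  have htrace : A.trace = ∑ i, μ i := by simpa using hA.isHermitian.trace_eq_sum_eigenvalues
  have hdet : A.det = ∏ i, μ i := by simpa using hA.isHermitian.det_eq_prod_eigenvalues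
  rw [hdet, Real.log_prod fun i _ => (hA.eigenvalues_pos i).ne', htrace, div_eq_inv_mul]
  calc ∑ i, Real.log (μ i)
        = Fintype.card n * ((Fintype.card n : ℝ)⁻¹ * ∑ i, Real.log (μ i)) := by field_simp
    _ ≤ _ := by gcongr

end Matrix

theorem Real.min_one_le_two_mul_log_one_add {x : ℝ} (hx : 0 ≤ x) :
    min 1 x ≤ 2 * Real.log (1 + x) := by
  rcases le_or_gt x 1 with hx1 | hx1
  · have hlog := Real.one_sub_inv_le_log_of_pos (by linarith : 0 < 1 + x)
    have : x / 2 ≤ 1 - (1 + x)⁻¹ := by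
      field_simp
      nlinarith
    linarith [min_le_right 1 x]
  · have hlog : Real.log 2 ≤ Real.log (1 + x) := Real.log_le_log (by norm_num) (by linarith)
    linarith [Real.log_two_gt_d9, min_le_left 1 x]

section designMatrix

variable {k : ℕ} (w : ℕ → Fin k → ℝ)

theorem designMatrix_succ (s : ℕ) :
    designMatrix w (s + 1) = designMatrix w s + vecMulVec (w s) (w s) := by
  rw [designMatrix, designMatrix, sum_range_succ, add_assoc]

theorem designMatrix_posDef (s : ℕ) : (designMatrix w s).PosDef :=
  PosDef.one.add_posSemidef <| posSemidef_sum _ fun τ _ => by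
    simpa using posSemidef_vecMulVec_self_star (w τ)

theorem trace_designMatrix (s : ℕ) :
    (designMatrix w s).trace = k + ∑ τ ∈ range s, w τ ⬝ᵥ w τ := by
  simp [designMatrix, trace_sum]

theorem det_designMatrix (t : ℕ) :
    (designMatrix w t).det =
      ∏ s ∈ range t, (1 + w s ⬝ᵥ (designMatrix w s)⁻¹ *ᵥ w s) := by
  induction t with
  | zero => simp [designMatrix]
  | succ t ih =>
    rw [designMatrix_succ, det_add_vecMulVec (designMatrix_posDef w t).det_pos.ne'.isUnit,
      prod_range_succ, ih]

theorem log_det_designMatrix_le {t : ℕ} {L : ℝ} (hL : ∀ τ, w τ ⬝ᵥ w τ ≤ L ^ 2) :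
    Real.log (designMatrix w t).det ≤ k * Real.log (1 + t * L ^ 2 / k) := by
  rcases Nat.eq_zero_or_pos k with rfl | hk
  · simp [designMatrix]
  have hk' : (0 : ℝ) < k := by exact_mod_cast hk
  have htrace : (designMatrix w t).trace ≤ k + t * L ^ 2 := by
    rw [trace_designMatrix]
    simpa using sum_le_sum fun τ (_ : τ ∈ range t) => hL τ
  have : Nonempty (Fin k) := Fin.pos_iff_nonempty.mp hk
  have htrace_pos : 0 < (designMatrix w t).trace := (designMatrix_posDef w t).trace_pos
  calc Real.log (designMatrix w t).det ≤ k * Real.log ((designMatrix w t).trace / k) := by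
        simpa using (designMatrix_posDef w t).log_det_le
    _ ≤ k * Real.log (1 + t * L ^ 2 / k) := by
        gcongr
        rw [div_le_iff₀ hk', add_mul, div_mul_cancel₀ _ hk'.ne']
        linarith

end designMatrix

/-- Elliptical potential lemma: if `‖w_τ‖ ≤ L` for all `τ`, then
`∑_{s=1}^t min(1, ‖w_s‖²_{W_s⁻¹}) ≤ 2 k log(1 + t L² / k)`. -/
theorem stmt0 (k t : ℕ) (L : ℝ) (w : ℕ → Fin k → ℝ)
    (hL : ∀ τ, Real.sqrt (w τ ⬝ᵥ w τ) ≤ L) :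
    ∑ s ∈ Finset.range t,
        min 1 (w s ⬝ᵥ (designMatrix w s)⁻¹.mulVec (w s)) ≤
      2 * k * Real.log (1 + t * L ^ 2 / k) := by
  have hx : ∀ s, 0 ≤ w s ⬝ᵥ (designMatrix w s)⁻¹ *ᵥ w s := fun s =>
    (designMatrix_posDef w s).inv.posSemidef.dotProduct_mulVec_nonneg (w s)
  calc ∑ s ∈ range t, min 1 (w s ⬝ᵥ (designMatrix w s)⁻¹ *ᵥ w s)
      ≤ ∑ s ∈ range t, 2 * Real.log (1 + w s ⬝ᵥ (designMatrix w s)⁻¹ *ᵥ w s) :=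
        sum_le_sum fun s _ => Real.min_one_le_two_mul_log_one_add (hx s)
    _ = 2 * Real.log (designMatrix w t).det := by
        rw [← mul_sum, det_designMatrix, Real.log_prod fun s _ => by linarith [hx s]]
    _ ≤ 2 * k * Real.log (1 + t * L ^ 2 / k) := by
        rw [mul_assoc]
        gcongr
        exact log_det_designMatrix_le w fun τ => (Real.sqrt_le_iff.mp (hL τ)).2
end

section
/- In the setting of a loop-free episodic MDP with layers $\mathcal{S}_0,\dots,\mathcal{S}_L$, fixed policy $\pi$, transition kernels $P, \hat{P}$, and reward functions $r, \hat{r} : \mathcal{S}\times\mathcal{A} \to [0,1]$ with $|\hat{r}(s,a) - r(s,a)| \le c(s,a)$ and $\|\hat{P}(\cdot|s,a)-P(\cdot|s,a)\|_1 \le d(s,a)$ for all $(s,a)$, define the values $v = \sum_{l=0}^{L-1}\sum_{s\in\mathcal{S}_l} \mu(s) r(s,\pi(s))$ and $\hat{v} = \sum_{l=0}^{L-1}\sum_{s\in\mathcal{S}_l} \hat\mu(s) \hat{r}(s,\pi(s))$, where $\mu, \hat\mu$ are the respective occupation measures. Then $\hat{v} - v \le \sum_{l=0}^{L-1}\sum_{s\in\mathcal{S}_l}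 |\hat\mu(s)-\mu(s)| + \sum_{l=0}^{L-1}\sum_{s\in\mathcal{S}_l} \mu(s)(\hat{r}(s,\pi(s)) - r(s,\pi(s)))$, and consequently $\hat{v} - v \le L \sum_{k=0}^{L-1}\sum_{s\in\mathcal{S}_k} \mu(s) d(s,\pi(s)) + \sum_{l=0}^{L-1}\sum_{s\in\mathcal{S}_l} \mu(s) c(s,\pi(s))$. -/
/-!
Write `Δ = μ̂ - μ`. Pointwise `μ̂ r̂ - μ r = Δ r̂ + μ (r̂ - r)` and `r̂ ≤ 1` give the first
inequality. For the second, the two occupation recursions give, one layer at a time,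
`μ̂ P̂ - μ P = Δ P̂ + μ (P̂ - P)`; since `P̂` is stochastic, the ℓ¹ norm of `Δ` grows by at most
`∑ μ d` from one layer to the next, so on layer `l` it is at most the sum of `μ d` over the
earlier layers, and summing over the `L` layers costs the factor `L`.
-/

open Finset

section LayeredFlow

variable {S : Type*} [Fintype S] (lay : S → ℕ) (L : ℕ)

/-- The occupation-measure recursion; for a policy `π` the kernel is `K s s' = P s (π s) s'`. -/
def IsLayeredFlow (K : S → S → ℝ) (μ : S → ℝ) : Prop :=
  ∀ s', 1 ≤ lay s' → lay s' ≤ L →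
    μ s' = ∑ s ∈ univ.filter (fun s => lay s + 1 = lay s'), μ s * K s s'

variable {lay L}

theorem IsLayeredFlow.nonneg {K : S → S → ℝ} {μ : S → ℝ} (hμ : IsLayeredFlow lay L K μ)
    (hK : ∀ s s', 0 ≤ K s s') (h0 : ∀ s, lay s = 0 → 0 ≤ μ s) :
    ∀ s, lay s ≤ L → 0 ≤ μ s := by
  suffices ∀ n s, lay s = n → n ≤ L → 0 ≤ μ s from fun s => this _ s rfl
  intro n
  induction n with
  | zero => exact fun s hs _ => h0 s hs
  | succ m ih =>
    intro s' hs' hle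
    rw [hμ s' (by omega) (by omega)]
    refine sum_nonneg fun s hs => mul_nonneg ?_ (hK _ _)
    exact ih s (by simp only [mem_filter] at hs; omega) (by omega)

theorem abs_mul_sub_mul_le {a b p q : ℝ} (hq : 0 ≤ q) (hb : 0 ≤ b) :
    |a * q - b * p| ≤ |a - b| * q + b * |q - p| :=
  calc |a * q - b * p| = |(a - b) * q + b * (q - p)| := by ring_nf
    _ ≤ |(a - b) * q| + |b * (q - p)| := abs_add_le _ _
    _ = |a - b| * q + b * |q - p| := by
      rw [abs_mul, abs_mul, abs_of_nonneg hq, abs_of_nonneg hb]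

variable {K Khat : S → S → ℝ} {d μ μhat : S → ℝ}

theorem IsLayeredFlow.sum_abs_sub_succ_le (hμ : IsLayeredFlow lay L K μ)
    (hμhat : IsLayeredFlow lay L Khat μhat) (hKhat_nn : ∀ s s', 0 ≤ Khat s s')
    (hKhat_sum : ∀ s, lay s < L →
      ∑ s' ∈ univ.filter (fun s' => lay s' = lay s + 1), Khat s s' = 1)
    (hd : ∀ s, lay s < L →
      ∑ s' ∈ univ.filter (fun s' => lay s' = lay s + 1), |Khat s s' - K s s'| ≤ d s)
    {m : ℕ} (hm : m < L) (hμ_nn : ∀ s, lay s = m → 0 ≤ μ s) :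
    ∑ s' ∈ univ.filter (fun s' => lay s' = m + 1), |μhat s' - μ s'| ≤
      ∑ s ∈ univ.filter (fun s => lay s = m), |μhat s - μ s| +
        ∑ s ∈ univ.filter (fun s => lay s = m), μ s * d s := by
  set prev := univ.filter (fun s => lay s = m)
  set next := univ.filter (fun s' => lay s' = m + 1)
  have hstep : ∀ s' ∈ next, |μhat s' - μ s'| ≤
      ∑ s ∈ prev, (|μhat s - μ s| * Khat s s' + μ s * |Khat s s' - K s s'|) := by
    intro s' hs'
    rw [mem_filter] at hs'
    have hprev : univ.filter (fun s => lay s + 1 = lay s') = prev :=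
      filter_congr fun s _ => by omega
    rw [hμhat s' (by omega) (by omega), hμ s' (by omega) (by omega), hprev,
      ← sum_sub_distrib]
    refine (abs_sum_le_sum_abs _ _).trans (sum_le_sum fun s hs => ?_)
    exact abs_mul_sub_mul_le (hKhat_nn _ _) (hμ_nn s (mem_filter.mp hs).2)
  calc ∑ s' ∈ next, |μhat s' - μ s'|
      ≤ ∑ s' ∈ next, ∑ s ∈ prev,
          (|μhat s - μ s| * Khat s s' + μ s * |Khat s s' - K s s'|) := sum_le_sum hstep
    _ = ∑ s ∈ prev, (|μhat s - μ s| * ∑ s' ∈ next, Khat s s' +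
          μ s * ∑ s' ∈ next, |Khat s s' - K s s'|) := by
      rw [sum_comm]
      simp only [sum_add_distrib, mul_sum]
    _ ≤ ∑ s ∈ prev, (|μhat s - μ s| + μ s * d s) := by
      refine sum_le_sum fun s hs => ?_
      have hs : lay s = m := (mem_filter.mp hs).2
      have hsum := hKhat_sum s (by omega)
      have hdist := hd s (by omega)
      rw [hs] at hsum hdist
      rw [hsum, mul_one]
      gcongr
      exact hμ_nn s hs
    _ = _ := sum_add_distrib

theorem IsLayeredFlow.sum_abs_sub_le (hμ : IsLayeredFlow lay L K μ)
    (hμhat : IsLayeredFlow lay L Khat μhat) (hKhat_nn : ∀ s s', 0 ≤ Khat s s')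
    (hKhat_sum : ∀ s, lay s < L →
      ∑ s' ∈ univ.filter (fun s' => lay s' = lay s + 1), Khat s s' = 1)
    (hd : ∀ s, lay s < L →
      ∑ s' ∈ univ.filter (fun s' => lay s' = lay s + 1), |Khat s s' - K s s'| ≤ d s)
    (h0 : ∀ s, lay s = 0 → μhat s = μ s) (hμ_nn : ∀ s, lay s < L → 0 ≤ μ s) :
    ∀ l ≤ L, ∑ s ∈ univ.filter (fun s => lay s = l), |μhat s - μ s| ≤
      ∑ k ∈ range l, ∑ s ∈ univ.filter (fun s => lay s = k), μ s * d s := by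
  intro l
  induction l with
  | zero =>
    intro _
    refine (sum_eq_zero fun s hs => ?_).le
    rw [h0 s (mem_filter.mp hs).2, sub_self, abs_zero]
  | succ m ih =>
    intro hle
    rw [sum_range_succ]
    refine (hμ.sum_abs_sub_succ_le hμhat hKhat_nn hKhat_sum hd (m := m) (by omega)
      fun s hs => hμ_nn s (by omega)).trans ?_
    gcongr
    exact ih (by omega)

end LayeredFlow

theorem mul_sub_mul_le_abs_sub_add {a b x y : ℝ} (hx : x ∈ Set.Icc (0 : ℝ) 1) :
    a * x - b * y ≤ |a - b| + b * (x - y) :=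
  calc a * x - b * y = (a - b) * x + b * (x - y) := by ring
    _ ≤ |a - b| + b * (x - y) := by
      gcongr
      calc (a - b) * x ≤ |a - b| * x := by gcongr; exacts [hx.1, le_abs_self _]
        _ ≤ |a - b| := mul_le_of_le_one_right (abs_nonneg _) hx.2

theorem sum_range_sum_range_le_mul {f : ℕ → ℝ} {L : ℕ} (hf : ∀ k < L, 0 ≤ f k) :
    ∑ l ∈ range L, ∑ k ∈ range l, f k ≤ L * ∑ k ∈ range L, f k :=
  calc ∑ l ∈ range L, ∑ k ∈ range l, f k ≤ ∑ _l ∈ range L, ∑ k ∈ range L, f k := by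
        refine sum_le_sum fun l hl => sum_le_sum_of_subset_of_nonneg ?_ fun k hk _ => ?_
        · exact range_subset_range.mpr (mem_range.mp hl).le
        · exact hf k (mem_range.mp hk)
    _ = L * ∑ k ∈ range L, f k := by rw [sum_const, card_range, nsmul_eq_mul]

theorem stmt5_general {S A : Type} [Fintype S]
    (L : ℕ) (lay : S → ℕ) (π : S → A)
    (P Phat : S → A → S → ℝ)
    (hPnn : ∀ s a s', 0 ≤ P s a s')
    (hQnn : ∀ s a s', 0 ≤ Phat s a s')
    (hQsum : ∀ s a, lay s < L →
      ∑ s' ∈ Finset.univ.filter (fun s' => lay s' = lay s + 1), Phat s a s' = 1)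
    (s0 : S) (hs0uniq : ∀ s, lay s = 0 → s = s0)
    (μ μhat : S → ℝ)
    (hμ0 : μ s0 = 1) (hμhat0 : μhat s0 = 1)
    (hμrec : ∀ s', 1 ≤ lay s' → lay s' ≤ L →
      μ s' = ∑ s ∈ Finset.univ.filter (fun s => lay s + 1 = lay s'), μ s * P s (π s) s')
    (hμhatrec : ∀ s', 1 ≤ lay s' → lay s' ≤ L →
      μhat s' = ∑ s ∈ Finset.univ.filter (fun s => lay s + 1 = lay s'),
        μhat s * Phat s (π s) s')
    -- reward functions with values in [0,1] and their error bounds: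
    (r rhat : S → A → ℝ)
    (hrhat : ∀ s a, rhat s a ∈ Set.Icc (0 : ℝ) 1)
    (c : S → A → ℝ)
    (hc : ∀ s a, |rhat s a - r s a| ≤ c s a)
    (d : S → A → ℝ)
    (hd : ∀ s a, lay s < L →
      ∑ s' ∈ Finset.univ.filter (fun s' => lay s' = lay s + 1),
        |Phat s a s' - P s a s'| ≤ d s a)
    -- the two values:
    (v vhat : ℝ)
    (hv : v = ∑ l ∈ Finset.range L,
      ∑ s ∈ Finset.univ.filter (fun s => lay s = l), μ s * r s (π s))
    (hvhat : vhat = ∑ l ∈ Finset.range L,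
      ∑ s ∈ Finset.univ.filter (fun s => lay s = l), μhat s * rhat s (π s)) :
    (vhat - v ≤
        (∑ l ∈ Finset.range L,
          ∑ s ∈ Finset.univ.filter (fun s => lay s = l), |μhat s - μ s|) +
        ∑ l ∈ Finset.range L,
          ∑ s ∈ Finset.univ.filter (fun s => lay s = l),
            μ s * (rhat s (π s) - r s (π s))) ∧
      vhat - v ≤
        (L : ℝ) * (∑ k ∈ Finset.range L,
          ∑ s ∈ Finset.univ.filter (fun s => lay s = k), μ s * d s (π s)) +
        ∑ l ∈ Finset.range L,
          ∑ s ∈ Finset.univ.filter (fun s => lay s = l), μ s * c s (π s) := by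
  have hμ_nn : ∀ s, lay s ≤ L → 0 ≤ μ s :=
    IsLayeredFlow.nonneg (K := fun s s' => P s (π s) s') hμrec (fun _ _ => hPnn _ _ _)
      fun s hs => by rw [hs0uniq s hs, hμ0]; exact zero_le_one
  have hlayer : ∀ l ≤ L, ∑ s ∈ univ.filter (fun s => lay s = l), |μhat s - μ s| ≤
      ∑ k ∈ range l, ∑ s ∈ univ.filter (fun s => lay s = k), μ s * d s (π s) :=
    IsLayeredFlow.sum_abs_sub_le (K := fun s s' => P s (π s) s')
      (Khat := fun s s' => Phat s (π s) s') hμrec hμhatrec (fun _ _ => hQnn _ _ _)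
      (fun s => hQsum s (π s)) (fun s => hd s (π s))
      (fun s hs => by rw [hs0uniq s hs, hμ0, hμhat0]) fun s hs => hμ_nn s hs.le
  have hvalue : vhat - v ≤
      (∑ l ∈ range L, ∑ s ∈ univ.filter (fun s => lay s = l), |μhat s - μ s|) +
        ∑ l ∈ range L, ∑ s ∈ univ.filter (fun s => lay s = l),
          μ s * (rhat s (π s) - r s (π s)) := by
    rw [hv, hvhat, ← sum_sub_distrib, ← sum_add_distrib]
    refine sum_le_sum fun l _ => ?_
    rw [← sum_sub_distrib, ← sum_add_distrib]
    exact sum_le_sum fun s _ => mul_sub_mul_le_abs_sub_add (hrhat s (π s))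
  refine ⟨hvalue, hvalue.trans (add_le_add ?_ ?_)⟩
  · refine (sum_le_sum fun l hl => hlayer l (mem_range.mp hl).le).trans
      (sum_range_sum_range_le_mul fun k hk => sum_nonneg fun s hs => ?_)
    have hs : lay s < L := (mem_filter.mp hs).2 ▸ hk
    exact mul_nonneg (hμ_nn s hs.le)
      ((sum_nonneg fun _ _ => abs_nonneg _).trans (hd s (π s) hs))
  · gcongr with l hl s hs
    · exact hμ_nn s ((mem_filter.mp hs).2 ▸ (mem_range.mp hl).le)
    · exact (le_abs_self _).trans (hc s (π s))

/-- Value-difference decomposition in a loop-free layered MDP: if rewards differ by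
at most `c(s,a)` and transitions by at most `d(s,a)` in ℓ¹, then the difference of
the occupation-measure-weighted values satisfies the two stated inequalities. -/
theorem stmt5 {S A : Type} [Fintype S] [Fintype A]
    (L : ℕ) (lay : S → ℕ) (π : S → A)
    (P Phat : S → A → S → ℝ)
    (hPnn : ∀ s a s', 0 ≤ P s a s')
    (hPsupp : ∀ s a s', P s a s' ≠ 0 → lay s' = lay s + 1)
    (hPsum : ∀ s a, lay s < L →
      ∑ s' ∈ Finset.univ.filter (fun s' => lay s' = lay s + 1), P s a s' = 1)
    (hQnn : ∀ s a s', 0 ≤ Phat s a s')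
    (hQsupp : ∀ s a s', Phat s a s' ≠ 0 → lay s' = lay s + 1)
    (hQsum : ∀ s a, lay s < L →
      ∑ s' ∈ Finset.univ.filter (fun s' => lay s' = lay s + 1), Phat s a s' = 1)
    (s0 : S) (hs0 : lay s0 = 0) (hs0uniq : ∀ s, lay s = 0 → s = s0)
    (μ μhat : S → ℝ)
    (hμ0 : μ s0 = 1) (hμhat0 : μhat s0 = 1)
    (hμrec : ∀ s', 1 ≤ lay s' → lay s' ≤ L →
      μ s' = ∑ s ∈ Finset.univ.filter (fun s => lay s + 1 = lay s'), μ s * P s (π s) s')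
    (hμhatrec : ∀ s', 1 ≤ lay s' → lay s' ≤ L →
      μhat s' = ∑ s ∈ Finset.univ.filter (fun s => lay s + 1 = lay s'),
        μhat s * Phat s (π s) s')
    -- reward functions with values in [0,1] and their error bounds:
    (r rhat : S → A → ℝ)
    (hr : ∀ s a, r s a ∈ Set.Icc (0 : ℝ) 1) (hrhat : ∀ s a, rhat s a ∈ Set.Icc (0 : ℝ) 1)
    (c : S → A → ℝ) (hc0 : ∀ s a, 0 ≤ c s a)
    (hc : ∀ s a, |rhat s a - r s a| ≤ c s a)
    (d : S → A → ℝ) (hd0 : ∀ s a, 0 ≤ d s a)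
    (hd : ∀ s a, lay s < L →
      ∑ s' ∈ Finset.univ.filter (fun s' => lay s' = lay s + 1),
        |Phat s a s' - P s a s'| ≤ d s a)
    -- the two values:
    (v vhat : ℝ)
    (hv : v = ∑ l ∈ Finset.range L,
      ∑ s ∈ Finset.univ.filter (fun s => lay s = l), μ s * r s (π s))
    (hvhat : vhat = ∑ l ∈ Finset.range L,
      ∑ s ∈ Finset.univ.filter (fun s => lay s = l), μhat s * rhat s (π s)) :
    (vhat - v ≤
        (∑ l ∈ Finset.range L,
          ∑ s ∈ Finset.univ.filter (fun s => lay s = l), |μhat s - μ s|) +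
        ∑ l ∈ Finset.range L,
          ∑ s ∈ Finset.univ.filter (fun s => lay s = l),
            μ s * (rhat s (π s) - r s (π s))) ∧
      vhat - v ≤
        (L : ℝ) * (∑ k ∈ Finset.range L,
          ∑ s ∈ Finset.univ.filter (fun s => lay s = k), μ s * d s (π s)) +
        ∑ l ∈ Finset.range L,
          ∑ s ∈ Finset.univ.filter (fun s => lay s = l), μ s * c s (π s) :=
  stmt5_general L lay π P Phat hPnn hQnn hQsum s0 hs0uniq μ μhat hμ0 hμhat0 hμrec hμhatrec r rhat
    hrhat c hc d hd v vhat hv hvhat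
end

section
/- Let $p^-, p^+ : \{1,\dots,k\} \to [0,1]$ with $p^-_i \le p^+_i$ for all $i$, $\sum_i p^-_i \le 1 \le \sum_i p^+_i$. Then there exists a probability vector $q$ on $\{1,\dots,k\}$ with $p^-_i \le q_i \le p^+_i$ for all $i$; moreover, given weights $w_1 \ge w_2 \ge \dots \ge w_k$, the vector $q^*$ constructed by setting $q^*_1 = \min(p^+_1, 1 - \sum_{i=2}^k p^-_i)$ and greedily reducing coordinates from index $k$ downward toward $p^-$ until $\sum_i q^*_i = 1$ maximizes $\sum_i q_i w_i$ over all probability vectors $q$ with $p^-_i \le q_i \le p^+_i$. -/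
open Finset

lemma abel_aux (d w : ℕ → ℝ) (hw : ∀ i, w (i + 1) ≤ w i) :
    ∀ n, (∀ m ≤ n, 0 ≤ ∑ i ∈ Finset.range m, d i) →
      w n * ∑ i ∈ Finset.range n, d i ≤ ∑ i ∈ Finset.range n, d i * w i := by
  intro n
  induction n with
  | zero => simp
  | succ n ih =>
    intro hD
    have ih' := ih (fun m hm => hD m (le_trans hm (Nat.le_succ n)))
    have h1 : 0 ≤ ∑ i ∈ Finset.range n, d i + d n := by
      have := hD (n + 1) le_rfl
      rwa [Finset.sum_range_succ] at this
    have h2 : w (n + 1) * (∑ i ∈ Finset.range n, d i + d n)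
        ≤ w n * (∑ i ∈ Finset.range n, d i + d n) :=
      mul_le_mul_of_nonneg_right (hw n) h1
    rw [Finset.sum_range_succ, Finset.sum_range_succ]
    nlinarith [h2]

lemma conv_aux {k : ℕ} (f : Fin k → ℝ) (m : ℕ) (hm : m ≤ k) :
    ∑ i ∈ Finset.range m, (if h : i < k then f ⟨i, h⟩ else 0)
      = ∑ i ∈ Finset.univ.filter (fun i : Fin k => (i : ℕ) < m), f i := by
  calc ∑ i ∈ Finset.range m, (if h : i < k then f ⟨i, h⟩ else 0)
      = ∑ i ∈ Finset.range m, (if i < m then (if h : i < k then f ⟨i, h⟩ else 0) else 0) :=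
        Finset.sum_congr rfl fun i hi => (if_pos (Finset.mem_range.1 hi)).symm
    _ = ∑ i ∈ Finset.range k, (if i < m then (if h : i < k then f ⟨i, h⟩ else 0) else 0) :=
        Finset.sum_subset (Finset.range_subset_range.2 hm)
          (fun x _ hx => if_neg (by simpa using hx))
    _ = ∑ i : Fin k, (if (i : ℕ) < m then f i else 0) := by
        rw [← Fin.sum_univ_eq_sum_range
          (fun i => if i < m then (if h : i < k then f ⟨i, h⟩ else 0) else 0) k]
        exact Finset.sum_congr rfl fun i _ => by simp [i.isLt]
    _ = ∑ i ∈ Finset.univ.filter (fun i : Fin k => (i : ℕ) < m), f i :=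
        (Finset.sum_filter _ _).symm


/-- Correctness of the inner step of extended dynamic programming. Given
componentwise confidence intervals `[p⁻ i, p⁺ i]` whose lower sums are ≤ 1 and
upper sums are ≥ 1: (a) the box contains a probability vector; (b) any vector
`q*` of the greedy form — first coordinate `min(p⁺ 0, 1 - ∑_{i ≠ 0} p⁻ i)`, an
index `j` with all earlier (nonzero) coordinates at the upper bound `p⁺`, all
later coordinates at the lower bound `p⁻`, feasible and summing to 1 — maximizes
`∑ q i * w i` over probability vectors in the box, where the weights `w` are
sorted in decreasing order. (Indices are 0-based: coordinate `0` plays the role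
of index `1` in the paper.) -/
theorem stmt9 (k : ℕ) (hk : 0 < k) (pminus pplus w : Fin k → ℝ)
    (hbox : ∀ i, 0 ≤ pminus i ∧ pminus i ≤ pplus i ∧ pplus i ≤ 1)
    (hlow : ∑ i, pminus i ≤ 1) (hhigh : 1 ≤ ∑ i, pplus i)
    (hw : Antitone w) :
    (∃ q : Fin k → ℝ, (∀ i, pminus i ≤ q i ∧ q i ≤ pplus i) ∧ ∑ i, q i = 1) ∧
    (∀ qstar : Fin k → ℝ,
      qstar ⟨0, hk⟩ = min (pplus ⟨0, hk⟩) (1 - ∑ i ∈ Finset.univ.erase ⟨0, hk⟩, pminus i) →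
      (∃ j : Fin k,
        (∀ i : Fin k, (⟨0, hk⟩ : Fin k) < i → i < j → qstar i = pplus i) ∧
        (∀ i : Fin k, j < i → qstar i = pminus i)) →
      (∀ i, pminus i ≤ qstar i ∧ qstar i ≤ pplus i) →
      ∑ i, qstar i = 1 →
      ∀ q : Fin k → ℝ, (∀ i, pminus i ≤ q i ∧ q i ≤ pplus i) → ∑ i, q i = 1 →
        ∑ i, q i * w i ≤ ∑ i, qstar i * w i) := by
  constructor
  · -- existence of a probability vector in the box
    by_cases h : ∑ i, pplus i = ∑ i, pminus i
    · exact ⟨pminus, fun i => ⟨le_rfl, (hbox i).2.1⟩, by linarith⟩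
    · have hd : 0 < ∑ i, pplus i - ∑ i, pminus i := by
        rcases lt_or_eq_of_le (le_trans hlow hhigh) with h' | h'
        · linarith
        · exact absurd h'.symm h
      set t : ℝ := (1 - ∑ i, pminus i) / (∑ i, pplus i - ∑ i, pminus i) with ht
      have ht0 : 0 ≤ t := div_nonneg (by linarith) (by linarith)
      have ht1 : t ≤ 1 := (div_le_one hd).2 (by linarith)
      refine ⟨fun i => pminus i + t * (pplus i - pminus i), fun i => ⟨?_, ?_⟩, ?_⟩
      · show pminus i ≤ pminus i + t * (pplus i - pminus i)
        nlinarith [(hbox i).2.1]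
      · show pminus i + t * (pplus i - pminus i) ≤ pplus i
        nlinarith [(hbox i).2.1]
      · have e : ∑ i, (pminus i + t * (pplus i - pminus i))
            = ∑ i, pminus i + t * (∑ i, pplus i - ∑ i, pminus i) := by
          rw [Finset.sum_add_distrib, ← Finset.mul_sum, Finset.sum_sub_distrib]
        rw [e, ht, div_mul_cancel₀ _ (ne_of_gt hd)]
        ring
  · rintro qstar h0 ⟨j, hj1, hj2⟩ hqs hsum1 q hq hsumq
    set z : Fin k := ⟨0, hk⟩ with hz
    have key : ∀ m : ℕ, ∑ i ∈ Finset.univ.filter (fun i : Fin k => (i : ℕ) < m), q i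
        ≤ ∑ i ∈ Finset.univ.filter (fun i : Fin k => (i : ℕ) < m), qstar i := by
      intro m
      by_cases hc : pplus z ≤ 1 - ∑ i ∈ Finset.univ.erase z, pminus i
      · -- qstar z = pplus z
        have h0' : qstar z = pplus z := by rw [h0]; exact min_eq_left hc
        rcases le_or_gt m j.val with hm | hm
        · apply Finset.sum_le_sum
          intro i hi
          have hi' : (i : ℕ) < m := (Finset.mem_filter.1 hi).2
          by_cases hiz : i = z
          · rw [hiz, h0']; exact (hq z).2
          · have hzi : z < i := by
              rw [Fin.lt_def]
              exact Nat.pos_of_ne_zero fun h => hiz (Fin.ext h)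
            have hij : i < j := by
              rw [Fin.lt_def]; exact lt_of_lt_of_le hi' hm
            rw [hj1 i hzi hij]; exact (hq i).2
        · have hcomp : ∑ i ∈ Finset.univ.filter (fun i : Fin k => ¬ (i : ℕ) < m), qstar i
              ≤ ∑ i ∈ Finset.univ.filter (fun i : Fin k => ¬ (i : ℕ) < m), q i := by
            apply Finset.sum_le_sum
            intro i hi
            have hi' : ¬ (i : ℕ) < m := (Finset.mem_filter.1 hi).2
            have hji : j < i := by
              rw [Fin.lt_def]
              omega
            rw [hj2 i hji]; exact (hq i).1
          have e1 := Finset.sum_filter_add_sum_filter_not Finset.univ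
            (fun i : Fin k => (i : ℕ) < m) q
          have e2 := Finset.sum_filter_add_sum_filter_not Finset.univ
            (fun i : Fin k => (i : ℕ) < m) qstar
          rw [hsumq] at e1
          rw [hsum1] at e2
          linarith
      · -- qstar z = 1 - ∑ erase pminus
        have h0' : qstar z = 1 - ∑ i ∈ Finset.univ.erase z, pminus i := by
          rw [h0]; exact min_eq_right (le_of_lt (not_le.1 hc))
        rcases Nat.eq_zero_or_pos m with rfl | hm
        · simp
        · have hzT : z ∈ Finset.univ.filter (fun i : Fin k => (i : ℕ) < m) :=
            Finset.mem_filter.2 ⟨Finset.mem_univ _, hm⟩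
          rw [← Finset.add_sum_erase _ qstar hzT]
          have A : ∑ i ∈ (Finset.univ.filter (fun i : Fin k => (i : ℕ) < m)).erase z, pminus i
              ≤ ∑ i ∈ (Finset.univ.filter (fun i : Fin k => (i : ℕ) < m)).erase z, qstar i :=
            Finset.sum_le_sum fun i _ => (hqs i).1
          have B := Finset.sum_filter_add_sum_filter_not (Finset.univ.erase z)
            (fun i : Fin k => (i : ℕ) < m) pminus
          have C : (Finset.univ.erase z).filter (fun i : Fin k => (i : ℕ) < m)
              = (Finset.univ.filter (fun i : Fin k => (i : ℕ) < m)).erase z :=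
            Finset.filter_erase _ _ _
          have D : (Finset.univ.erase z).filter (fun i : Fin k => ¬ (i : ℕ) < m)
              = Finset.univ.filter (fun i : Fin k => ¬ (i : ℕ) < m) := by
            rw [Finset.filter_erase]
            apply Finset.erase_eq_of_notMem
            simp only [Finset.mem_filter, Finset.mem_univ, true_and, not_lt, hz]
            omega
          rw [C, D] at B
          have E : ∑ i ∈ Finset.univ.filter (fun i : Fin k => ¬ (i : ℕ) < m), pminus i
              ≤ ∑ i ∈ Finset.univ.filter (fun i : Fin k => ¬ (i : ℕ) < m), q i :=
            Finset.sum_le_sum fun i _ => (hq i).1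
          have F := Finset.sum_filter_add_sum_filter_not Finset.univ
            (fun i : Fin k => (i : ℕ) < m) q
          rw [hsumq] at F
          rw [h0']
          linarith
    -- now Abel summation
    set d' : ℕ → ℝ := fun i => if h : i < k then qstar ⟨i, h⟩ - q ⟨i, h⟩ else 0 with hd'
    set w' : ℕ → ℝ := fun i => w ⟨min i (k - 1), by omega⟩ with hw'def
    have hw' : ∀ i, w' (i + 1) ≤ w' i := by
      intro i
      apply hw
      rw [Fin.mk_le_mk]
      exact min_le_min (Nat.le_succ i) le_rfl
    have hconv : ∀ m ≤ k, ∑ i ∈ Finset.range m, d' i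
        = ∑ i ∈ Finset.univ.filter (fun i : Fin k => (i : ℕ) < m), (qstar i - q i) := by
      intro m hm
      exact conv_aux (fun i => qstar i - q i) m hm
    have hDsum : ∀ m ≤ k, 0 ≤ ∑ i ∈ Finset.range m, d' i := by
      intro m hm
      rw [hconv m hm, Finset.sum_sub_distrib, sub_nonneg]
      exact key m
    have htot : ∑ i ∈ Finset.range k, d' i = 0 := by
      rw [hconv k le_rfl]
      have : Finset.univ.filter (fun i : Fin k => (i : ℕ) < k) = Finset.univ := by
        apply Finset.filter_true_of_mem
        intro i _
        exact i.isLt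
      rw [this, Finset.sum_sub_distrib, hsum1, hsumq, sub_self]
    have final := abel_aux d' w' hw' k hDsum
    rw [htot, mul_zero] at final
    have e : ∑ i ∈ Finset.range k, d' i * w' i = ∑ i : Fin k, (qstar i - q i) * w i := by
      rw [← Fin.sum_univ_eq_sum_range (fun i => d' i * w' i) k]
      refine Finset.sum_congr rfl fun i _ => ?_
      have h1 : d' (i : ℕ) = qstar i - q i := by
        rw [hd']
        simp [i.isLt]
      have h2 : w' (i : ℕ) = w i := by
        rw [hw'def]
        have hmin : min (i : ℕ) (k - 1) = (i : ℕ) := by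
          have := i.isLt; omega
        simp only []
        congr 1
        exact Fin.ext hmin
      rw [h1, h2]
    rw [e] at final
    have e2 : ∑ i : Fin k, (qstar i - q i) * w i
        = ∑ i, qstar i * w i - ∑ i, q i * w i := by
      rw [← Finset.sum_sub_distrib]
      exact Finset.sum_congr rfl fun i _ => by ring
    linarith [e2 ▸ final]
end
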